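/- arXiv:2406.14824 — 2 statements merged into one kernel-verified Lean document; each statement's English description precedes it below -/
import Mathlib

section
/- Suppose A ⊆ ℤ is a finite set tiling ℤ with a tiling A ⊕ T = ℤ whose translation set T has least period M, where M has prime factorization p_1^{n_1}···p_d^{n_d}. Write the tiling as A ⊕ B = ℤ_M with B ⊆ {0,...,M-1}. Then for every j ∈ {1,...,d} there exists a divisor s of M such that p_j^{n_j} | s and Φ_s(X) divides A(X). -/
open Polynomial Finset

private lemma cyc_dvd_of_root {s : ℕ} (hs : 0 < s) {ζ : ℂ} (hζ : IsPrimitiveRoot ζ s)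
    {f : ℤ[X]} (hf : aeval ζ f = 0) : cyclotomic s ℤ ∣ f := by
  rw [Polynomial.cyclotomic_eq_minpoly hζ hs]
  exact minpoly.isIntegrallyClosed_dvd (hζ.isIntegral hs) hf

/-- If `A ⊕ T = ℤ` with `T = B ⊕ Mℤ` having least period `M`, then for each prime `p ∣ M`
there is `s ∣ M` with `p^{v_p(M)} ∣ s` and `Φ_s ∣ A(X)`. -/
theorem stmt4 (A B : Finset ℕ) (M : ℕ) (hM : 0 < M) (hB : B ⊆ range M)
    (T : Set ℤ) (hT : T = {n : ℤ | ∃ b ∈ B, ∃ k : ℤ, n = b + M * k})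
    (htile : ∀ n : ℤ, ∃! at_ : ℕ × ℤ, at_.1 ∈ A ∧ at_.2 ∈ T ∧ (at_.1 : ℤ) + at_.2 = n)
    (hmin : ∀ P : ℕ, 0 < P → (∀ t : ℤ, t ∈ T ↔ t + P ∈ T) → M ≤ P) :
    ∀ p ∈ M.primeFactors, ∃ s, s ∣ M ∧ p ^ (M.factorization p) ∣ s ∧
      cyclotomic s ℤ ∣ ∑ a ∈ A, (X : ℤ[X]) ^ a := by
  intro p hp
  have hp' : p.Prime := Nat.prime_of_mem_primeFactors hp
  have hpM : p ∣ M := Nat.dvd_of_mem_primeFactors hp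
  by_contra hcon
  push_neg at hcon
  -- hcon : ∀ s, s ∣ M → p ^ M.factorization p ∣ s → ¬ cyclotomic s ℤ ∣ A(X)
  set m := M / p with hm
  have hmM : m * p = M := Nat.div_mul_cancel hpM
  have hm0 : 0 < m := Nat.div_pos (Nat.le_of_dvd hM hpM) hp'.pos
  have hmlt : m < M := Nat.div_lt_self hM hp'.one_lt
  have hmdvd : m ∣ M := ⟨p, hmM.symm⟩
  have hn0 : 0 < M.factorization p := hp'.factorization_pos_of_dvd hM.ne' hpM
  -- Step 1: unique representation of residues
  have hrep : ∀ r : ℕ, r < M →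
      ∃! ab : ℕ × ℕ, ab.1 ∈ A ∧ ab.2 ∈ B ∧ (ab.1 + ab.2) % M = r := by
    intro r hr
    obtain ⟨⟨a, t⟩, ⟨haA, htT, hat⟩, huniq⟩ := htile (r : ℤ)
    rw [hT] at htT
    obtain ⟨b, hbB, k, rfl⟩ := htT
    have hbM : b < M := mem_range.mp (hB hbB)
    refine ⟨(a, b), ⟨haA, hbB, ?_⟩, ?_⟩
    · have h1 : ((a : ℤ) + b) % M = r := by
        have he : (a : ℤ) + b = r + M * (-k) := by push_cast at hat ⊢; linarith
        rw [he, Int.add_mul_emod_self_left, Int.emod_eq_of_lt (by positivity)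
          (by exact_mod_cast hr)]
      have h2 : (((a + b) % M : ℕ) : ℤ) = ((a : ℤ) + b) % M := by push_cast; rfl
      exact_mod_cast h2.trans h1
    · rintro ⟨a', b'⟩ ⟨ha', hb', hab'⟩
      dsimp only at ha' hb' hab'
      have hb'M : b' < M := mem_range.mp (hB hb')
      set q := (a' + b') / M with hq
      have hmod : a' + b' = M * q + r := by
        rw [hq]
        have := Nat.div_add_mod (a' + b') M
        omega
      have ht' : ((b' : ℤ) + M * (-q) : ℤ) ∈ T := by
        rw [hT]; exact ⟨b', hb', -q, rfl⟩
      have heq : ((a' : ℕ) : ℤ) + ((b' : ℤ) + M * (-q)) = r := by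
        have : ((a' : ℤ)) + b' = M * q + r := by exact_mod_cast congrArg (Nat.cast : ℕ → ℤ) hmod
        push_cast at this ⊢; linarith
      have huq := huniq (a', (b' : ℤ) + M * (-q)) ⟨ha', ht', heq⟩
      have ha : a' = a := congrArg Prod.fst huq
      have hbk : (b' : ℤ) + M * (-q) = (b : ℤ) + M * k := congrArg Prod.snd huq
      have hbb : ((b' : ℤ)) % M = ((b : ℤ)) % M := by
        have : ((b' : ℤ) + M * (-q)) % M = ((b : ℤ) + M * k) % M := by rw [hbk]
        rwa [Int.add_mul_emod_self_left, Int.add_mul_emod_self_left] at this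
      rw [Int.emod_eq_of_lt (by positivity) (by exact_mod_cast hb'M),
        Int.emod_eq_of_lt (by positivity) (by exact_mod_cast hbM)] at hbb
      have : b' = b := by exact_mod_cast hbb
      simp [ha, this]
  -- Step 2: vanishing at nontrivial M-th roots of unity
  have hzero : ∀ ζ : ℂ, ζ ^ M = 1 → ζ ≠ 1 →
      (∑ a ∈ A, ζ ^ a) * (∑ b ∈ B, ζ ^ b) = 0 := by
    intro ζ hζM hζ1
    have hpowmod : ∀ k : ℕ, ζ ^ k = ζ ^ (k % M) := by
      intro k
      conv_lhs => rw [← Nat.div_add_mod k M]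
      rw [pow_add, pow_mul, hζM, one_pow, one_mul]
    rw [Finset.sum_mul_sum]
    have hmain : ∑ a ∈ A, ∑ b ∈ B, ζ ^ a * ζ ^ b = ∑ r ∈ range M, ζ ^ r := by
      rw [← Finset.sum_product']
      refine Finset.sum_bij (fun ab _ => (ab.1 + ab.2) % M) ?_ ?_ ?_ ?_
      · intro ab _; exact mem_range.mpr (Nat.mod_lt _ hM)
      · intro ab1 h1 ab2 h2 heq
        rw [Finset.mem_product] at h1 h2
        obtain ⟨w, _, hu⟩ := hrep ((ab1.1 + ab1.2) % M) (Nat.mod_lt _ hM)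
        exact (hu ab1 ⟨h1.1, h1.2, rfl⟩).trans (hu ab2 ⟨h2.1, h2.2, heq.symm⟩).symm
      · intro r hr
        obtain ⟨ab, ⟨h1, h2, h3⟩, _⟩ := hrep r (mem_range.mp hr)
        exact ⟨ab, Finset.mem_product.mpr ⟨h1, h2⟩, h3⟩
      · intro ab _; rw [← pow_add, hpowmod]
    rw [hmain, geom_sum_eq hζ1, hζM]
    simp
  -- membership in `M.divisors \ m.divisors` forces `p ^ n ∣ s`
  have hfact : ∀ s ∈ M.divisors \ m.divisors, p ^ (M.factorization p) ∣ s := by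
    intro s hs
    rw [Finset.mem_sdiff, Nat.mem_divisors, Nat.mem_divisors] at hs
    obtain ⟨⟨hsM, _⟩, hsm⟩ := hs
    have hs0 : s ≠ 0 := by rintro rfl; exact hM.ne' (Nat.eq_zero_of_zero_dvd hsM)
    by_contra hnd
    apply hsm
    refine ⟨?_, hm0.ne'⟩
    rw [← Nat.factorization_le_iff_dvd hs0 hm0.ne']
    intro q
    have hmfact : m.factorization = M.factorization - p.factorization := by
      rw [hm, Nat.factorization_div hpM]
    rcases eq_or_ne q p with rfl | hqp
    · have hlt : s.factorization q < M.factorization q := by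
        by_contra hle
        exact hnd ((pow_dvd_pow q (le_of_not_gt hle)).trans (Nat.ordProj_dvd s q))
      have : m.factorization q = M.factorization q - 1 := by
        rw [hmfact, Finsupp.tsub_apply, hp'.factorization]
        simp
      omega
    · have h1 : s.factorization q ≤ M.factorization q :=
        (Nat.factorization_le_iff_dvd hs0 hM.ne').mpr hsM q
      have : m.factorization q = M.factorization q := by
        rw [hmfact, Finsupp.tsub_apply, hp'.factorization]
        simp [Finsupp.single_apply, hqp.symm]
      omega
  -- Step 3: each such cyclotomic divides B(X)
  set Bp : ℤ[X] := ∑ b ∈ B, (X : ℤ[X]) ^ b with hBpdef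
  have hBdvd : ∀ s ∈ M.divisors \ m.divisors, cyclotomic s ℤ ∣ Bp := by
    intro s hs
    have hpns := hfact s hs
    have hsM : s ∣ M := (Nat.mem_divisors.mp (Finset.mem_sdiff.mp hs).1).1
    have hs0 : 0 < s := Nat.pos_of_mem_divisors (Finset.mem_sdiff.mp hs).1
    have hps : p ∣ s := (dvd_pow_self p hn0.ne').trans hpns
    have hs1 : s ≠ 1 := by
      rintro rfl
      have h1 := Nat.le_of_dvd one_pos hps
      have h2 := hp'.two_le
      omega
    set ζ : ℂ := Complex.exp (2 * Real.pi * Complex.I / s) with hζdef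
    have hζ : IsPrimitiveRoot ζ s := Complex.isPrimitiveRoot_exp s hs0.ne'
    have hζM : ζ ^ M = 1 := by
      obtain ⟨c, rfl⟩ := hsM
      rw [pow_mul, hζ.pow_eq_one, one_pow]
    have hζ1 : ζ ≠ 1 := by
      intro h
      exact hs1 (Nat.dvd_one.mp (hζ.dvd_of_pow_eq_one 1 (by rw [h, one_pow])))
    have h0 := hzero ζ hζM hζ1
    have hevalA : aeval ζ (∑ a ∈ A, (X : ℤ[X]) ^ a) = ∑ a ∈ A, ζ ^ a := by
      simp
    have hevalB : aeval ζ Bp = ∑ b ∈ B, ζ ^ b := by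
      simp [hBpdef]
    rcases mul_eq_zero.mp h0 with hA0 | hB0
    · exact absurd (cyc_dvd_of_root hs0 hζ (by rw [hevalA]; exact hA0)) (hcon s hsM hpns)
    · exact cyc_dvd_of_root hs0 hζ (by rw [hevalB]; exact hB0)
  -- the product over ℚ divides B(X)
  have hproddvd : (∏ s ∈ M.divisors \ m.divisors, cyclotomic s ℚ) ∣
      Bp.map (Int.castRingHom ℚ) := by
    refine Finset.prod_dvd_of_coprime ?_ ?_
    · intro s hs t ht hst
      exact cyclotomic.isCoprime_rat hst
    · intro s hs
      have := Polynomial.map_dvd (Int.castRingHom ℚ) (hBdvd s hs)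
      rwa [map_cyclotomic_int] at this
  -- identify the product with the geometric sum G
  set G : ℤ[X] := ∑ i ∈ range p, ((X : ℤ[X]) ^ m) ^ i with hGdef
  have hGgeom : (X ^ m - 1 : ℤ[X]) * G = X ^ M - 1 := by
    rw [mul_comm, geom_sum_mul, ← pow_mul, hmM]
  have hGmonic : G.Monic := by
    have h1 : (X ^ m - 1 : ℤ[X]).Monic := by
      simpa using monic_X_pow_sub_C (1 : ℤ) hm0.ne'
    have h2 : ((X ^ m - 1 : ℤ[X]) * G).Monic := by
      rw [hGgeom]; simpa using monic_X_pow_sub_C (1 : ℤ) hM.ne'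
    exact h1.of_mul_monic_left h2
  have hsub : m.divisors ⊆ M.divisors := Nat.divisors_subset_of_dvd hM.ne' hmdvd
  have hprodeq : (∏ s ∈ M.divisors \ m.divisors, cyclotomic s ℚ) =
      G.map (Int.castRingHom ℚ) := by
    have hne : (X ^ m - 1 : ℚ[X]) ≠ 0 := by
      simpa using X_pow_sub_C_ne_zero hm0 (1 : ℚ)
    apply mul_left_cancel₀ hne
    have hmapG : (X ^ m - 1 : ℚ[X]) * G.map (Int.castRingHom ℚ) = X ^ M - 1 := by
      have := congrArg (Polynomial.map (Int.castRingHom ℚ)) hGgeom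
      simpa using this
    rw [hmapG, mul_comm, ← prod_cyclotomic_eq_X_pow_sub_one hm0 ℚ,
      ← prod_cyclotomic_eq_X_pow_sub_one hM ℚ, Finset.prod_sdiff hsub]
  have hGdvd : G ∣ Bp := by
    rw [← Polynomial.map_dvd_map (Int.castRingHom ℚ) Int.cast_injective hGmonic]
    rw [← hprodeq]
    exact hproddvd
  obtain ⟨Cc, hBC⟩ := hGdvd
  -- coefficient analysis
  have hcoeffB : ∀ j, Bp.coeff j = if j ∈ B then 1 else 0 := by
    intro j
    rw [hBpdef, finset_sum_coeff]
    simp [coeff_X_pow, Finset.sum_ite_eq]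
  have hBmem : ∃ b, b ∈ B := by
    obtain ⟨⟨a, b⟩, ⟨_, hb, _⟩, _⟩ := hrep 0 hM
    exact ⟨b, hb⟩
  have hBpne : Bp ≠ 0 := by
    obtain ⟨b, hb⟩ := hBmem
    intro h
    have := hcoeffB b
    rw [h] at this
    simp [hb] at this
  have hGne : G ≠ 0 := hGmonic.ne_zero
  have hCne : Cc ≠ 0 := by rintro rfl; rw [mul_zero] at hBC; exact hBpne hBC
  have hdegB : Bp.natDegree ≤ M - 1 := by
    rw [natDegree_le_iff_coeff_eq_zero]
    intro N hN
    rw [hcoeffB]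
    have : N ∉ B := fun h => by have := mem_range.mp (hB h); omega
    simp [this]
  have hdegXm : (X ^ m - 1 : ℤ[X]).natDegree = m := by
    simpa using natDegree_X_pow_sub_C (n := m) (r := (1 : ℤ))
  have hdegXM : (X ^ M - 1 : ℤ[X]).natDegree = M := by
    simpa using natDegree_X_pow_sub_C (n := M) (r := (1 : ℤ))
  have hdegG : G.natDegree = M - m := by
    have h1 : ((X ^ m - 1 : ℤ[X]) * G).natDegree = M := by rw [hGgeom, hdegXM]
    have hne : (X ^ m - 1 : ℤ[X]) ≠ 0 := by
      simpa using X_pow_sub_C_ne_zero hm0 (1 : ℤ)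
    rw [natDegree_mul hne hGne, hdegXm] at h1
    omega
  have hdegC : Cc.natDegree ≤ m - 1 := by
    have h1 : Bp.natDegree = G.natDegree + Cc.natDegree := by
      rw [hBC, natDegree_mul hGne hCne]
    omega
  have hkey : ∀ j, j < M → Bp.coeff j = Cc.coeff (j % m) := by
    intro j hj
    have hGC : G * Cc = ∑ i ∈ range p, Cc * X ^ (m * i) := by
      rw [hGdef, Finset.sum_mul]
      exact Finset.sum_congr rfl fun i _ => by rw [← pow_mul, mul_comm (((X:ℤ[X])^(m*i))) Cc]
    have hdivlt : j / m < p := (Nat.div_lt_iff_lt_mul hm0).mpr (by rw [mul_comm p m, hmM]; exact hj)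
    rw [hBC, hGC, finset_sum_coeff]
    rw [Finset.sum_eq_single_of_mem (j / m) (mem_range.mpr hdivlt)]
    · rw [coeff_mul_X_pow']
      have hdm := Nat.div_add_mod j m
      have h1 : m * (j / m) ≤ j := by omega
      rw [if_pos h1]
      congr 1
      omega
    · intro i _ hne
      rw [coeff_mul_X_pow']
      split_ifs with hle
      · apply coeff_eq_zero_of_natDegree_lt
        have hdm := Nat.div_add_mod j m
        have hmod := Nat.mod_lt j hm0
        rcases Nat.lt_or_ge i (j / m) with hlt | hge
        · have h2 : m * (i + 1) ≤ m * (j / m) := Nat.mul_le_mul_left m hlt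
          rw [Nat.mul_succ] at h2
          omega
        · have hgt : j / m < i := lt_of_le_of_ne hge (Ne.symm hne)
          have h2 : m * (j / m + 1) ≤ m * i := Nat.mul_le_mul_left m hgt
          rw [Nat.mul_succ] at h2
          omega
      · rfl
  have hmem : ∀ x y : ℕ, x < M → y < M → x % m = y % m → (x ∈ B ↔ y ∈ B) := by
    intro x y hx hy hxy
    have hc : Bp.coeff x = Bp.coeff y := by rw [hkey x hx, hkey y hy, hxy]
    rw [hcoeffB, hcoeffB] at hc
    by_cases h1 : x ∈ B <;> by_cases h2 : y ∈ B <;> simp [h1, h2] at hc ⊢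
  -- membership characterization of T
  have hMZ : (0 : ℤ) < (M : ℤ) := by exact_mod_cast hM
  have hTmem : ∀ t : ℤ, t ∈ T ↔ (t % (M : ℤ)).toNat ∈ B := by
    intro t
    rw [hT]
    simp only [Set.mem_setOf_eq]
    constructor
    · rintro ⟨b, hb, k, rfl⟩
      have hbM : b < M := mem_range.mp (hB hb)
      have : ((b : ℤ) + M * k) % M = b := by
        rw [Int.add_mul_emod_self_left, Int.emod_eq_of_lt (by positivity)
          (by exact_mod_cast hbM)]
      rw [this]
      simpa using hb
    · intro h
      refine ⟨(t % (M : ℤ)).toNat, h, t / M, ?_⟩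
      have h0 : 0 ≤ t % (M : ℤ) := Int.emod_nonneg t hMZ.ne'
      rw [Int.toNat_of_nonneg h0]
      exact (Int.emod_add_mul_ediv t M).symm
  -- T is m-periodic: contradiction with minimality
  have hperiod : ∀ t : ℤ, t ∈ T ↔ t + (m : ℤ) ∈ T := by
    intro t
    rw [hTmem, hTmem]
    have hmZdvd : (m : ℤ) ∣ (M : ℤ) := by exact_mod_cast hmdvd
    have hx0 : 0 ≤ t % (M : ℤ) := Int.emod_nonneg t hMZ.ne'
    have hxM : t % (M : ℤ) < M := Int.emod_lt_of_pos t hMZ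
    have hy0 : 0 ≤ (t + m) % (M : ℤ) := Int.emod_nonneg _ hMZ.ne'
    have hyM : (t + m) % (M : ℤ) < M := Int.emod_lt_of_pos _ hMZ
    apply hmem
    · omega
    · omega
    · -- (t % M).toNat % m = ((t+m) % M).toNat % m
      have h1 : (t % (M : ℤ)) % m = t % m := Int.emod_emod_of_dvd t hmZdvd
      have h2 : ((t + m) % (M : ℤ)) % m = t % m := by
        rw [Int.emod_emod_of_dvd _ hmZdvd]
        have : t + (m : ℤ) = t + m * 1 := by ring
        rw [this, Int.add_mul_emod_self_left]
      have hcast : (((t % (M : ℤ)).toNat % m : ℕ) : ℤ) = (((t + m) % (M : ℤ)).toNat % m : ℕ) := by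
        push_cast
        rw [Int.toNat_of_nonneg hx0, Int.toNat_of_nonneg hy0, h1, h2]
      exact_mod_cast hcast
  have := hmin m hm0 hperiod
  omega
end

section
/- There is an absolute constant c > 0 with the following property. Suppose A is a finite set of integers that tiles ℤ, with diameter D ≥ 3, and suppose A ⊕ T = ℤ is a tiling whose translation set T has least period M, where M has the same set of prime factors as |A|. Then M ≤ exp(c·(log D)²/(log log D)). -/
/-!
Reduce the tiling modulo its period: `A ⊕ (T ∩ [0, M))` is a complete residue system mod `M`, so
`A(ζ) · T_M(ζ) = 0` at every `M`-th root of unity `ζ ≠ 1`. If `p ∣ M` and `T_M(ζ)` vanished at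
every such `ζ` with `ζ ^ (M / p) ≠ 1`, Fourier inversion would make `T` periodic with period
`M / p`, against the minimality of `M`. Hence `A(ζ) = 0` for some `ζ` whose order `s` is
divisible by `p ^ a = ordProj[p] M`; then `Φ_s` divides the mask polynomial of `A`, so
`p ^ a ≤ 2 φ(p ^ a) ≤ 2 φ(s) ≤ 2 D` and `M ≤ (2 D) ^ d` with `d` the number of primes of `M`.
These primes all divide `|A| ≤ D + 1`, so `d ! ≤ D + 1`, i.e. `d ≪ log D / log log D`.
-/

open Finset Function Polynomial
open scoped Nat

def IsTiling (A : Finset ℤ) (T : Set ℤ) : Prop :=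
  ∀ n : ℤ, ∃! p : ℤ × ℤ, p.1 ∈ A ∧ p.2 ∈ T ∧ p.1 + p.2 = n

open Classical in
noncomputable def periodWindow (T : Set ℤ) (M : ℕ) : Finset ℤ :=
  {t ∈ Ico 0 (M : ℤ) | t ∈ T}

theorem mem_periodWindow {T : Set ℤ} {M : ℕ} {t : ℤ} :
    t ∈ periodWindow T M ↔ (0 ≤ t ∧ t < M) ∧ t ∈ T := by
  simp [periodWindow]

theorem Nat.ordProj_dvd_of_not_dvd_div {M s p : ℕ} (hp : p.Prime) (hs : s ∣ M)
    (hsp : ¬ s ∣ M / p) : p ^ M.factorization p ∣ s := by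
  obtain ⟨g, rfl⟩ := hs
  have hpg : ¬ p ∣ g := by
    rintro ⟨h, rfl⟩
    exact hsp ⟨h, by rw [mul_left_comm, Nat.mul_div_cancel_left _ hp.pos]⟩
  exact ((hp.coprime_iff_not_dvd.2 hpg).pow_left _).dvd_of_dvd_mul_right (Nat.ordProj_dvd _ p)

theorem Nat.prime_pow_le_two_mul_totient {p : ℕ} (hp : p.Prime) (a : ℕ) :
    p ^ a ≤ 2 * φ (p ^ a) := by
  cases a with
  | zero => simp
  | succ a =>
    rw [Nat.totient_prime_pow_succ hp, pow_succ, ← mul_assoc, mul_comm 2, mul_assoc]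
    exact Nat.mul_le_mul_left _ (by have := hp.two_le; omega)

theorem Nat.cast_le_pow_card_primeFactors {R : Type*} [CommSemiring R] [PartialOrder R]
    [IsOrderedRing R] {n : ℕ} (hn : n ≠ 0) {B : R}
    (h : ∀ p ∈ n.primeFactors, ((p ^ n.factorization p : ℕ) : R) ≤ B) :
    (n : R) ≤ B ^ #n.primeFactors := by
  conv_lhs => rw [← Nat.prod_factorization_pow_eq_self hn]
  rw [Nat.prod_factorization_eq_prod_primeFactors, Nat.cast_prod, ← prod_const]
  exact prod_le_prod (fun _ _ => Nat.cast_nonneg _) h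

theorem Finset.factorial_card_le_prod (S : Finset ℕ) (hS : ∀ n ∈ S, 0 < n) :
    (#S)! ≤ ∏ n ∈ S, n := by
  induction S using Finset.strongInduction with
  | _ S ih =>
    rcases S.eq_empty_or_nonempty with rfl | hne
    · simp
    have hm := S.max'_mem hne
    have hcard : #S ≤ S.max' hne := by
      calc #S ≤ #(Icc 1 (S.max' hne)) :=
            card_le_card fun n hn => mem_Icc.2 ⟨hS n hn, S.le_max' n hn⟩
        _ = S.max' hne := by simp
    have herase := ih _ (erase_ssubset hm) fun n hn => hS n (mem_of_mem_erase hn)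
    rw [card_erase_of_mem hm] at herase
    calc (#S)! = #S * (#S - 1)! := (Nat.mul_factorial_pred (card_pos.2 hne).ne').symm
      _ ≤ S.max' hne * ∏ n ∈ S.erase (S.max' hne), n := Nat.mul_le_mul hcard herase
      _ = ∏ n ∈ S, n := mul_prod_erase S (fun n => n) hm

theorem Nat.factorial_card_primeFactors_le {n : ℕ} (hn : n ≠ 0) : (#n.primeFactors)! ≤ n :=
  (n.primeFactors.factorial_card_le_prod fun _ hp => (Nat.prime_of_mem_primeFactors hp).pos).trans
    (Nat.le_of_dvd (Nat.pos_of_ne_zero hn) (Nat.prod_primeFactors_dvd n))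

theorem Finset.card_le_max'_sub_min'_add_one (A : Finset ℤ) (hA : A.Nonempty) :
    (#A : ℤ) ≤ A.max' hA - A.min' hA + 1 := by
  have hsub : A ⊆ Icc (A.min' hA) (A.max' hA) :=
    fun a ha => mem_Icc.2 ⟨A.min'_le a ha, A.le_max' a ha⟩
  calc (#A : ℤ) ≤ #(Icc (A.min' hA) (A.max' hA)) := by exact_mod_cast card_le_card hsub
    _ = A.max' hA - A.min' hA + 1 := by
      rw [Int.card_Icc_of_le _ _ (by linarith [A.min'_le_max' hA])]; ring

theorem Nat.mul_log_log_le_of_factorial_le_sq (d : ℕ) {x : ℝ} (hx : Real.exp 1 < x)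
    (hd : (d ! : ℝ) ≤ x ^ 2) : d * Real.log (Real.log x) ≤ 6 * Real.log x := by
  set L := Real.log x
  have hL : 1 < L := by rwa [Real.lt_log_iff_exp_lt (by linarith [Real.exp_pos 1])]
  set ℓ := Real.log L
  have hℓ : 0 < ℓ := Real.log_pos hL
  rcases Nat.eq_zero_or_pos d with rfl | hd0
  · rw [Nat.cast_zero, zero_mul]; linarith
  have hdr : (0 : ℝ) < d := by exact_mod_cast hd0
  have hlog : d * Real.log d ≤ d + 2 * L := by
    have h := Real.pow_div_factorial_le_exp d hdr.le d
    rw [div_le_iff₀ (by positivity)] at h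
    rw [← Real.log_pow, Real.log_le_iff_le_exp (by positivity), Real.exp_add, two_mul,
      Real.exp_add, Real.exp_log (by linarith [Real.exp_pos 1])]
    nlinarith [Real.exp_pos (d : ℝ)]
  rcases le_or_gt (1 + ℓ / 2) (Real.log d) with hbig | hsmall
  · nlinarith
  -- with `u = √L`: `d < e u` and `ℓ = 2 log u < 2 u`, so `d ℓ < 2 e L`
  set u := Real.exp (ℓ / 2)
  have hu2 : u * u = L := by
    rw [← Real.exp_add, add_halves, Real.exp_log (by linarith)]
  have hℓu : ℓ < 2 * u := by linarith [Real.add_one_le_exp (ℓ / 2)]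
  have hdu : (d : ℝ) < Real.exp 1 * u := by
    rwa [← Real.exp_add, ← Real.log_lt_iff_lt_exp hdr]
  nlinarith [Real.exp_one_lt_d9, Real.exp_pos 1, Real.exp_pos (ℓ / 2)]

theorem sq_pow_le_exp_of_factorial_le_sq (d : ℕ) {x : ℝ} (hx : Real.exp 1 < x)
    (hd : (d ! : ℝ) ≤ x ^ 2) :
    (x ^ 2) ^ d ≤ Real.exp (12 * Real.log x ^ 2 / Real.log (Real.log x)) := by
  have hlog := Nat.mul_log_log_le_of_factorial_le_sq d hx hd
  have hx0 : 0 < x := by linarith [Real.exp_pos 1]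
  have hL : 1 < Real.log x := (Real.lt_log_iff_exp_lt hx0).2 hx
  have hℓ : 0 < Real.log (Real.log x) := Real.log_pos hL
  calc (x ^ 2) ^ d = Real.exp (2 * d * Real.log x) := by
        rw [← pow_mul, show 2 * d * Real.log x = ((2 * d : ℕ) : ℝ) * Real.log x by push_cast; ring,
          Real.exp_nat_mul, Real.exp_log hx0]
    _ ≤ _ := Real.exp_le_exp.2 <| by rw [le_div_iff₀ hℓ]; nlinarith

theorem geom_sum_eq_zero_of_pow_eq_one {K : Type*} [Field K] {x : K} {n : ℕ} (hx : x ^ n = 1)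
    (hx1 : x ≠ 1) : ∑ i ∈ range n, x ^ i = 0 :=
  (mul_eq_zero.1 (by rw [geom_sum_mul, hx, sub_self])).resolve_right (sub_ne_zero.2 hx1)

theorem zpow_emod_eq_of_pow_eq_one {G₀ : Type*} [GroupWithZero G₀] {x : G₀} {n : ℕ}
    (hx : x ^ n = 1) (m : ℤ) : x ^ (m % n) = x ^ m := by
  rcases eq_or_ne n 0 with rfl | hn
  · simp
  have hx0 : x ≠ 0 := by rintro rfl; simp [hn] at hx
  conv_rhs => rw [← Int.emod_add_mul_ediv m n]
  rw [zpow_add₀ hx0, zpow_mul, zpow_natCast, hx, one_zpow, mul_one]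

theorem pow_zpow_comm {G₀ : Type*} [GroupWithZero G₀] (x : G₀) (k : ℕ) (n : ℤ) :
    (x ^ k) ^ n = (x ^ n) ^ k := by
  simpa only [zpow_natCast] using zpow_comm x k n

namespace IsPrimitiveRoot

variable {K : Type*} [Field K] {ω : K} {M : ℕ}

theorem sum_range_pow_zpow (hω : IsPrimitiveRoot ω M) (n : ℤ) :
    ∑ k ∈ range M, (ω ^ k) ^ n = if (M : ℤ) ∣ n then (M : K) else 0 := by
  simp_rw [pow_zpow_comm]
  split_ifs with h
  · simp [(hω.zpow_eq_one_iff_dvd n).2 h]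
  · refine geom_sum_eq_zero_of_pow_eq_one ?_ fun h1 => h ((hω.zpow_eq_one_iff_dvd n).1 h1)
    rw [← pow_zpow_comm, hω.pow_eq_one, one_zpow]

variable [CharZero K]

theorem sum_range_zpow_neg_mul_sum (hω : IsPrimitiveRoot ω M) (S : Finset ℤ) (x : ℤ) :
    ∑ k ∈ range M, (ω ^ k) ^ (-x) * ∑ t ∈ S, (ω ^ k) ^ t = M * #{t ∈ S | t ≡ x [ZMOD M]} := by
  rcases eq_or_ne M 0 with rfl | hM
  · simp
  have hω0 : ω ≠ 0 := hω.ne_zero hM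
  simp_rw [mul_sum, ← zpow_add₀ (pow_ne_zero _ hω0)]
  rw [sum_comm]
  have hdvd (t : ℤ) : (M : ℤ) ∣ -x + t ↔ t ≡ x [ZMOD M] := by
    rw [Int.modEq_comm, Int.modEq_iff_dvd, neg_add_eq_sub]
  simp_rw [hω.sum_range_pow_zpow, hdvd, ← sum_filter, sum_const, nsmul_eq_mul, mul_comm]

theorem card_modEq_add_eq (hω : IsPrimitiveRoot ω M) (hM : M ≠ 0) (S : Finset ℤ) (N : ℕ)
    (hS : ∀ k < M, (ω ^ k) ^ N ≠ 1 → ∑ t ∈ S, (ω ^ k) ^ t = 0) (x : ℤ) :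
    #{t ∈ S | t ≡ x + N [ZMOD M]} = #{t ∈ S | t ≡ x [ZMOD M]} := by
  have hω0 : ω ≠ 0 := hω.ne_zero hM
  suffices (M : K) * #{t ∈ S | t ≡ x + N [ZMOD M]} = M * #{t ∈ S | t ≡ x [ZMOD M]} by
    exact_mod_cast mul_left_cancel₀ (Nat.cast_ne_zero.2 hM) this
  rw [← hω.sum_range_zpow_neg_mul_sum, ← hω.sum_range_zpow_neg_mul_sum]
  refine sum_congr rfl fun k hk => ?_
  by_cases hk1 : (ω ^ k) ^ N = 1
  · rw [neg_add, zpow_add₀ (pow_ne_zero _ hω0), zpow_neg _ (N : ℤ), zpow_natCast, hk1, inv_one,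
      mul_one]
  · rw [hS k (mem_range.1 hk) hk1, mul_zero, mul_zero]

/-- `Φ_s`, the minimal polynomial of `ζ`, divides the mask polynomial of `A - min A`. -/
theorem totient_le_max'_sub_min' {ζ : K} {s : ℕ} (hζ : IsPrimitiveRoot ζ s) (hs : 0 < s)
    {A : Finset ℤ} (hA : A.Nonempty) (h : ∑ a ∈ A, ζ ^ a = 0) :
    (φ s : ℤ) ≤ A.max' hA - A.min' hA := by
  set m := A.min' hA
  set Q : ℚ[X] := ∑ a ∈ A, X ^ (a - m).toNat
  have hζ0 : ζ ≠ 0 := hζ.ne_zero hs.ne'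
  have hQζ : aeval ζ Q = 0 := by
    have hterm : ∀ a ∈ A, aeval ζ (X ^ (a - m).toNat : ℚ[X]) = ζ ^ a * ζ ^ (-m) := by
      intro a ha
      rw [map_pow, aeval_X, ← zpow_natCast, Int.toNat_of_nonneg (sub_nonneg.2 (A.min'_le a ha)),
        sub_eq_add_neg, zpow_add₀ hζ0]
    rw [map_sum, sum_congr rfl hterm, ← sum_mul, h, zero_mul]
  have hQ0 : Q ≠ 0 := fun h0 => by
    have hQ1 : Q.eval 1 = #A := by simp [Q, eval_finsetSum]
    simp [h0, eq_comm, hA.ne_empty] at hQ1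
  have hdeg : Q.natDegree ≤ (A.max' hA - m).toNat :=
    natDegree_sum_le_of_forall_le _ _ fun a ha => by
      rw [natDegree_X_pow]; exact Int.toNat_le_toNat (sub_le_sub_right (A.le_max' a ha) m)
  have htot : φ s ≤ Q.natDegree := by
    rw [← natDegree_cyclotomic s ℚ, cyclotomic_eq_minpoly_rat hζ hs]
    exact natDegree_le_of_dvd (minpoly.dvd ℚ ζ hQζ) hQ0
  have := A.min'_le_max' hA
  omega

end IsPrimitiveRoot

theorem Function.Periodic.mem_iff_of_modEq {T : Set ℤ} {M : ℤ} (hT : Periodic (· ∈ T) M)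
    {s t : ℤ} (h : s ≡ t [ZMOD M]) : s ∈ T ↔ t ∈ T := by
  obtain ⟨j, hj⟩ := Int.modEq_iff_dvd.1 h
  rw [show t = s + j * M by linarith]
  exact (Iff.of_eq (hT.int_mul j s)).symm

section periodWindow

variable {T : Set ℤ} {M : ℕ}

theorem eq_of_mem_periodWindow_of_modEq {s t : ℤ} (hs : s ∈ periodWindow T M)
    (ht : t ∈ periodWindow T M) (h : s ≡ t [ZMOD M]) : s = t := by
  rw [mem_periodWindow] at hs ht
  rwa [Int.ModEq, Int.emod_eq_of_lt hs.1.1 hs.1.2, Int.emod_eq_of_lt ht.1.1 ht.1.2] at h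

theorem Function.Periodic.emod_mem_periodWindow (hT : Periodic (· ∈ T) (M : ℤ)) (hM : 0 < M)
    {x : ℤ} (hx : x ∈ T) : x % M ∈ periodWindow T M :=
  mem_periodWindow.2 ⟨⟨Int.emod_nonneg _ (by omega), Int.emod_lt_of_pos _ (by omega)⟩,
    (hT.mem_iff_of_modEq (Int.mod_modEq x M)).2 hx⟩

theorem Function.Periodic.mem_iff_card_modEq_pos (hT : Periodic (· ∈ T) (M : ℤ)) (hM : 0 < M)
    (x : ℤ) : x ∈ T ↔ 0 < #{t ∈ periodWindow T M | t ≡ x [ZMOD M]} := by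
  rw [card_pos]
  constructor
  · exact fun hx => ⟨x % M, mem_filter.2 ⟨hT.emod_mem_periodWindow hM hx, Int.mod_modEq x M⟩⟩
  · rintro ⟨t, ht⟩
    rw [mem_filter] at ht
    exact (hT.mem_iff_of_modEq ht.2).1 (mem_periodWindow.1 ht.1).2

theorem Function.Periodic.of_sum_periodWindow_eq_zero {K : Type*} [Field K] [CharZero K]
    {ω : K} (hT : Periodic (· ∈ T) (M : ℤ)) (hω : IsPrimitiveRoot ω M) (hM : 0 < M) (N : ℕ)
    (hN : ∀ k < M, (ω ^ k) ^ N ≠ 1 → ∑ t ∈ periodWindow T M, (ω ^ k) ^ t = 0) :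
    Periodic (· ∈ T) (N : ℤ) := fun x => by
  simp only [hT.mem_iff_card_modEq_pos hM, hω.card_modEq_add_eq hM.ne' _ N hN]

end periodWindow

namespace IsTiling

variable {A : Finset ℤ} {T : Set ℤ} {M : ℕ}

theorem eq_of_add_modEq (htile : IsTiling A T) (hT : Periodic (· ∈ T) (M : ℤ)) {a a' t t' : ℤ}
    (ha : a ∈ A) (ha' : a' ∈ A) (ht : t ∈ periodWindow T M) (ht' : t' ∈ periodWindow T M)
    (h : a + t ≡ a' + t' [ZMOD M]) : a = a' ∧ t = t' := by
  set δ := a + t - (a' + t')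
  have hδ : t' + δ ≡ t' [ZMOD M] := by
    simpa using (Int.modEq_zero_iff_dvd.2 (Int.modEq_iff_dvd.1 h.symm)).add_left t'
  have hrep := (htile (a + t)).unique (y₁ := (a, t)) (y₂ := (a', t' + δ))
    ⟨ha, (mem_periodWindow.1 ht).2, rfl⟩
    ⟨ha', (hT.mem_iff_of_modEq hδ).2 (mem_periodWindow.1 ht').2, by ring⟩
  obtain rfl : a = a' := congrArg Prod.fst hrep
  exact ⟨rfl, eq_of_mem_periodWindow_of_modEq ht ht' (Int.ModEq.add_left_cancel' a h)⟩

theorem exists_add_modEq (htile : IsTiling A T) (hT : Periodic (· ∈ T) (M : ℤ)) (hM : 0 < M)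
    (r : ℤ) : ∃ a ∈ A, ∃ t ∈ periodWindow T M, a + t ≡ r [ZMOD M] := by
  obtain ⟨⟨a, t⟩, ⟨ha, ht, rfl⟩, -⟩ := htile r
  exact ⟨a, ha, t % M, hT.emod_mem_periodWindow hM ht, (Int.mod_modEq t M).add_left a⟩

theorem sum_mul_sum_periodWindow_eq_zero (htile : IsTiling A T) (hT : Periodic (· ∈ T) (M : ℤ))
    (hM : 0 < M) {K : Type*} [Field K] {ζ : K} (hζ : ζ ^ M = 1) (hζ1 : ζ ≠ 1) :
    (∑ a ∈ A, ζ ^ a) * ∑ t ∈ periodWindow T M, ζ ^ t = 0 := by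
  have hMz : (0 : ℤ) < M := by exact_mod_cast hM
  have hζ0 : ζ ≠ 0 := by rintro rfl; simp [hM.ne'] at hζ
  calc (∑ a ∈ A, ζ ^ a) * ∑ t ∈ periodWindow T M, ζ ^ t
      = ∑ p ∈ A ×ˢ periodWindow T M, ζ ^ (p.1 + p.2) := by
        rw [sum_mul_sum, ← sum_product']; simp_rw [zpow_add₀ hζ0]
    _ = ∑ r ∈ Ico (0 : ℤ) M, ζ ^ r := by
      refine sum_bij (fun p _ => (p.1 + p.2) % M) (fun p _ => ?_) (fun p hp q hq h => ?_)
        (fun r hr => ?_) (fun p _ => (zpow_emod_eq_of_pow_eq_one hζ _).symm)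
      · exact mem_Ico.2 ⟨Int.emod_nonneg _ hMz.ne', Int.emod_lt_of_pos _ hMz⟩
      · rw [mem_product] at hp hq
        have := htile.eq_of_add_modEq hT hp.1 hq.1 hp.2 hq.2 h
        exact Prod.ext this.1 this.2
      · obtain ⟨a, ha, t, ht, hr'⟩ := htile.exists_add_modEq hT hM r
        rw [mem_Ico] at hr
        exact ⟨(a, t), mem_product.2 ⟨ha, ht⟩, Eq.trans hr' (Int.emod_eq_of_lt hr.1 hr.2)⟩
    _ = 0 := by
      rw [Int.Ico_eq_finset_map, sum_map]
      simpa using geom_sum_eq_zero_of_pow_eq_one hζ hζ1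

theorem ordProj_le_two_mul (htile : IsTiling A T) (hM : 0 < M) (hT : Periodic (· ∈ T) (M : ℤ))
    {p : ℕ} (hp : p.Prime) (hTp : ¬ Periodic (· ∈ T) ((M / p : ℕ) : ℤ)) (hA : A.Nonempty) :
    ((p ^ M.factorization p : ℕ) : ℤ) ≤ 2 * (A.max' hA - A.min' hA) := by
  obtain ⟨ω, hω⟩ : ∃ ω : ℂ, IsPrimitiveRoot ω M := ⟨_, Complex.isPrimitiveRoot_exp M hM.ne'⟩
  obtain ⟨k, -, hkp, hk⟩ : ∃ k < M, (ω ^ k) ^ (M / p) ≠ 1 ∧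
      ∑ t ∈ periodWindow T M, (ω ^ k) ^ t ≠ 0 := by
    by_contra! h
    exact hTp (hT.of_sum_periodWindow_eq_zero hω hM _ h)
  set ζ := ω ^ k
  have hζM : ζ ^ M = 1 := by rw [← pow_mul, mul_comm, pow_mul, hω.pow_eq_one, one_pow]
  have hAζ : ∑ a ∈ A, ζ ^ a = 0 :=
    (mul_eq_zero.1 (htile.sum_mul_sum_periodWindow_eq_zero hT hM hζM
      (by rintro h; simp [h] at hkp))).resolve_right hk
  have hs : 0 < orderOf ζ := orderOf_pos_iff.2 (isOfFinOrder_iff_pow_eq_one.2 ⟨M, hM, hζM⟩)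
  have hdvd : p ^ M.factorization p ∣ orderOf ζ :=
    Nat.ordProj_dvd_of_not_dvd_div hp (orderOf_dvd_of_pow_eq_one hζM)
      fun h => hkp (orderOf_dvd_iff_pow_eq_one.1 h)
  have h1 := (IsPrimitiveRoot.orderOf ζ).totient_le_max'_sub_min' hs hA hAζ
  have h2 := Nat.prime_pow_le_two_mul_totient hp (M.factorization p)
  have h3 := Nat.le_of_dvd (Nat.totient_pos.2 hs) (Nat.totient_dvd_of_dvd hdvd)
  omega

end IsTiling

/-- There is an absolute constant `c > 0` such that whenever a finite set `A ⊆ ℤ` of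
diameter `D ≥ 3` tiles `ℤ` by a translation set `T` of least period `M`, where `M` has
the same prime factors as `|A|`, we have `M ≤ exp(c (log D)² / log log D)`. -/
theorem stmt11 : ∃ c : ℝ, 0 < c ∧
    ∀ (A : Finset ℤ) (hA : A.Nonempty) (T : Set ℤ) (M : ℕ),
      3 ≤ A.max' hA - A.min' hA →
      (∀ n : ℤ, ∃! at_ : ℤ × ℤ, at_.1 ∈ A ∧ at_.2 ∈ T ∧ at_.1 + at_.2 = n) →
      0 < M →
      (∀ t : ℤ, t ∈ T ↔ t + M ∈ T) →
      (∀ P : ℕ, 0 < P → (∀ t : ℤ, t ∈ T ↔ t + P ∈ T) → M ≤ P) →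
      M.primeFactors = A.card.primeFactors →
      (M : ℝ) ≤ Real.exp (c * (Real.log (A.max' hA - A.min' hA)) ^ 2 /
        Real.log (Real.log (A.max' hA - A.min' hA))) := by
  refine ⟨12, by norm_num, fun A hA T M hD3 htile hM hper hmin hpf => ?_⟩
  have hT : Periodic (· ∈ T) (M : ℤ) := fun t => propext (hper t).symm
  set D : ℤ := A.max' hA - A.min' hA
  rw [show (A.max' hA : ℝ) - A.min' hA = D by push_cast [D]; ring]
  have hpow : ∀ p ∈ M.primeFactors, ((p ^ M.factorization p : ℕ) : ℝ) ≤ (D : ℝ) ^ 2 := by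
    intro p hp
    have hp' := Nat.prime_of_mem_primeFactors hp
    have hTp : ¬ Periodic (· ∈ T) ((M / p : ℕ) : ℤ) := fun h =>
      (Nat.div_lt_self hM hp'.one_lt).not_ge <| hmin _
        (Nat.div_pos (Nat.le_of_mem_primeFactors hp) hp'.pos) fun t => Iff.of_eq (h t).symm
    have h2D : ((p ^ M.factorization p : ℕ) : ℤ) ≤ 2 * D :=
      IsTiling.ordProj_le_two_mul htile hM hT hp' hTp hA
    have : ((p ^ M.factorization p : ℕ) : ℤ) ≤ D ^ 2 := by nlinarith
    exact_mod_cast this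
  have hfac : ((#M.primeFactors)! : ℝ) ≤ (D : ℝ) ^ 2 := by
    have h1 := Nat.factorial_card_primeFactors_le hA.card_pos.ne'
    have h2 := A.card_le_max'_sub_min'_add_one hA
    have : ((#(#A).primeFactors)! : ℤ) ≤ D ^ 2 := by nlinarith
    rw [hpf]
    exact_mod_cast this
  have hDe : Real.exp 1 < D := by
    have : (3 : ℝ) ≤ D := by exact_mod_cast hD3
    linarith [Real.exp_one_lt_d9]
  exact (Nat.cast_le_pow_card_primeFactors hM.ne' hpow).trans
    (sq_pow_le_exp_of_factorial_le_sq _ hDe hfac)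
end
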